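/- arXiv:math/0609750 — 2 statements merged into one kernel-verified Lean document; each statement's English description precedes it below -/
import Mathlib

section
/- Let q > 1, c > 0, and let M : [τ₂, ∞) → (0, ∞) be a differentiable function satisfying M'(τ) = -c M(τ)^q - ω(τ), where ω(τ)/M(τ)^q → 0 as τ → ∞ and M(τ) → 0 as τ → ∞. Then τ M(τ)^{q-1} → 1/((q-1)c) as τ → ∞. -/
open Filter Topology

lemma deriv_tendsto_div_linear {T₀ l : ℝ} {f f' : ℝ → ℝ}
    (hf : ∀ τ ≥ T₀, HasDerivAt f (f' τ) τ)
    (hl : Tendsto f' atTop (𝓝 l)) :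
    Tendsto (fun τ => f τ / τ) atTop (𝓝 l) := by
  rw [Metric.tendsto_atTop]
  intro ε hε
  obtain ⟨T₁, hT₁⟩ := Metric.tendsto_atTop.mp hl (ε / 2) (by positivity)
  set T : ℝ := max (max T₀ T₁) 0 with hT
  have hTT₀ : T₀ ≤ T := le_max_of_le_left (le_max_left _ _)
  have hTT₁ : T₁ ≤ T := le_max_of_le_left (le_max_right _ _)
  have hT0 : 0 ≤ T := le_max_right _ _
  -- work with g = f - l * id
  set g : ℝ → ℝ := fun τ => f τ - l * τ with hg
  have hg' : ∀ x ≥ T, HasDerivAt g (f' x - l) x := by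
    intro x hx
    exact ((hf x (hTT₀.trans hx)).sub ((hasDerivAt_id x).const_mul l)).congr_deriv (by ring)
  have hcont : ContinuousOn g (Set.Ici T) := fun x hx =>
    (hg' x hx).continuousAt.continuousWithinAt
  have hdiff : DifferentiableOn ℝ g (interior (Set.Ici T)) := by
    rw [interior_Ici]
    exact fun x hx => ((hg' x (le_of_lt hx)).differentiableAt).differentiableWithinAt
  have hderiv : ∀ x ∈ interior (Set.Ici T), deriv g x = f' x - l := by
    rw [interior_Ici]
    exact fun x hx => (hg' x (le_of_lt hx)).deriv
  have hub : ∀ x ∈ interior (Set.Ici T), deriv g x ≤ ε / 2 := by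
    intro x hx
    rw [hderiv x hx]
    rw [interior_Ici] at hx
    have := hT₁ x (hTT₁.trans (le_of_lt hx))
    rw [Real.dist_eq] at this
    linarith [abs_le.mp this.le |>.2]
  have hlb : ∀ x ∈ interior (Set.Ici T), -(ε / 2) ≤ deriv g x := by
    intro x hx
    rw [hderiv x hx]
    rw [interior_Ici] at hx
    have := hT₁ x (hTT₁.trans (le_of_lt hx))
    rw [Real.dist_eq] at this
    linarith [abs_le.mp this.le |>.1]
  have key : ∀ τ ≥ T, |g τ - g T| ≤ ε / 2 * (τ - T) := by
    intro τ hτ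
    have h1 := (convex_Ici T).mul_sub_le_image_sub_of_le_deriv hcont hdiff hlb T
      Set.self_mem_Ici τ hτ hτ
    have h2 := (convex_Ici T).image_sub_le_mul_sub_of_deriv_le hcont hdiff hub T
      Set.self_mem_Ici τ hτ hτ
    rw [abs_le]
    constructor <;> nlinarith
  refine ⟨max (T + 1) (2 * |g T| / ε + 1), fun τ hτ => ?_⟩
  have hτT : T + 1 ≤ τ := le_trans (le_max_left _ _) hτ
  have hτpos : 0 < τ := by linarith
  have hτ2 : 2 * |g T| / ε + 1 ≤ τ := le_trans (le_max_right _ _) hτ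
  have hgT : |g T| / τ < ε / 2 := by
    rw [div_lt_iff₀ hτpos]
    have h2 : 2 * |g T| / ε < τ := by linarith
    rw [div_lt_iff₀ hε] at h2
    linarith
  have hkey := key τ (by linarith)
  have : f τ / τ - l = (g τ - g T) / τ + g T / τ := by
    field_simp [hg]
    ring
  rw [Real.dist_eq, this]
  calc |(g τ - g T) / τ + g T / τ| ≤ |(g τ - g T) / τ| + |g T / τ| := abs_add_le _ _
    _ = |g τ - g T| / τ + |g T| / τ := by
        rw [abs_div, abs_div, abs_of_pos hτpos]
    _ < ε := by
        have h1 : |g τ - g T| / τ ≤ ε / 2 := by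
          rw [div_le_iff₀ hτpos]
          calc |g τ - g T| ≤ ε / 2 * (τ - T) := hkey
            _ ≤ ε / 2 * τ := by nlinarith
        linarith

/-- Asymptotics for the perturbed Bernoulli ODE `M' = -c M^q - ω` with
`ω/M^q → 0` and `M → 0`: one has `τ M(τ)^{q-1} → 1/((q-1)c)`. -/
theorem perturbed_bernoulli_asymptotics (q c τ₂ : ℝ) (hq : 1 < q) (hc : 0 < c)
    (M ω : ℝ → ℝ)
    (hMpos : ∀ τ ≥ τ₂, 0 < M τ)
    (hODE : ∀ τ ≥ τ₂, HasDerivAt M (-c * M τ ^ q - ω τ) τ)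
    (hω : Tendsto (fun τ => ω τ / M τ ^ q) atTop (𝓝 0))
    (hM0 : Tendsto M atTop (𝓝 0)) :
    Tendsto (fun τ => τ * M τ ^ (q - 1)) atTop (𝓝 (1 / ((q - 1) * c))) := by
  set N : ℝ → ℝ := fun τ => M τ ^ (1 - q) with hNdef
  have hN : ∀ τ ≥ τ₂, HasDerivAt N ((q - 1) * (c + ω τ / M τ ^ q)) τ := by
    intro τ hτ
    have hMτ := hMpos τ hτ
    have h := (hODE τ hτ).rpow_const (p := 1 - q) (Or.inl hMτ.ne')
    convert h using 1
    have hpow : M τ ^ (1 - q - 1) = (M τ ^ q)⁻¹ := by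
      rw [show (1 - q - 1 : ℝ) = -q by ring, Real.rpow_neg hMτ.le]
    rw [hpow]
    have hMq : (0 : ℝ) < M τ ^ q := Real.rpow_pos_of_pos hMτ q
    field_simp
    ring
  have hl : Tendsto (fun τ => (q - 1) * (c + ω τ / M τ ^ q)) atTop
      (𝓝 ((q - 1) * c)) := by
    have := ((hω.const_add c).const_mul (q - 1))
    simpa using this
  have hdiv := deriv_tendsto_div_linear hN hl
  have hne : (q - 1) * c ≠ 0 := ne_of_gt (mul_pos (by linarith) hc)
  have hinv := hdiv.inv₀ hne
  rw [show (1 / ((q - 1) * c)) = ((q - 1) * c)⁻¹ by rw [one_div]]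
  refine hinv.congr' ?_
  filter_upwards [eventually_ge_atTop (max τ₂ 1)] with τ hτ
  have hττ₂ : τ₂ ≤ τ := le_trans (le_max_left _ _) hτ
  have hτ1 : (1 : ℝ) ≤ τ := le_trans (le_max_right _ _) hτ
  have hMτ := hMpos τ hττ₂
  have hNpos : 0 < N τ := Real.rpow_pos_of_pos hMτ _
  have : (N τ / τ)⁻¹ = τ * (N τ)⁻¹ := by
    rw [inv_div, div_eq_mul_inv]
  rw [this, hNdef]
  simp only
  rw [← Real.rpow_neg hMτ.le, show -(1 - q) = q - 1 by ring]
end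

section
/- Let N ≥ 1, m > N/2, and q⋆ = (N+2)/(N+1). There exists a constant C > 0 such that for all f, g ∈ L²(ℝ^N) with finite weighted norms |f|_m = ‖(1+|ξ|^{2m})^{1/2} f‖_{L²} and |g|_m, one has ‖ |f|^{q⋆-1} g ‖_{L¹(ℝ^N)} ≤ C |f|_m^{q⋆-1} |g|_m. -/
open MeasureTheory
open scoped ENNReal

private lemma aux_weight_integrable (N : ℕ) (hN : 1 ≤ N) (m : ℝ) (hm : m > (N : ℝ) / 2) :
    Integrable (fun ξ : EuclideanSpace ℝ (Fin N) =>
      (1 + ‖ξ‖ ^ (2 * m)) ^ (-(((N : ℝ) + 2) / (N : ℝ)))) volume := by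
  have hn1 : (1 : ℝ) ≤ N := by exact_mod_cast hN
  have hn0 : (0 : ℝ) < N := by linarith
  set s : ℝ := ((N : ℝ) + 2) / (N : ℝ) with hs_def
  have hs1 : 1 < s := by rw [hs_def, lt_div_iff₀ hn0]; linarith
  have hm1 : (1 : ℝ) ≤ 2 * m := by nlinarith
  have hr : (Module.finrank ℝ (EuclideanSpace ℝ (Fin N)) : ℝ) < 2 * m * s := by
    rw [finrank_euclideanSpace_fin]
    calc (N : ℝ) < 2 * m := by linarith
      _ ≤ 2 * m * s := le_mul_of_one_le_right (by linarith) hs1.le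
  refine ((integrable_one_add_norm hr).const_mul ((2 : ℝ) ^ (2 * m * s))).mono'
    (Measurable.aestronglyMeasurable (by fun_prop))
    (Filter.Eventually.of_forall fun ξ => ?_)
  set t : ℝ := ‖ξ‖ with ht_def
  have ht : 0 ≤ t := norm_nonneg _
  have hApos : (0 : ℝ) < 1 + t ^ (2 * m) := by positivity
  have key : (1 + t) ^ (2 * m) ≤ 2 ^ (2 * m) * (1 + t ^ (2 * m)) := by
    rcases le_total t 1 with h | h
    · calc (1 + t) ^ (2 * m) ≤ 2 ^ (2 * m) :=
            Real.rpow_le_rpow (by linarith) (by linarith) (by linarith)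
        _ ≤ 2 ^ (2 * m) * (1 + t ^ (2 * m)) :=
            le_mul_of_one_le_right (by positivity)
              (le_add_of_nonneg_right (Real.rpow_nonneg ht _))
    · calc (1 + t) ^ (2 * m) ≤ (2 * t) ^ (2 * m) :=
            Real.rpow_le_rpow (by linarith) (by linarith) (by linarith)
        _ = 2 ^ (2 * m) * t ^ (2 * m) := Real.mul_rpow (by norm_num) ht
        _ ≤ 2 ^ (2 * m) * (1 + t ^ (2 * m)) := by
            have := Real.rpow_nonneg ht (2 * m)
            have h2 : (0:ℝ) ≤ (2:ℝ) ^ (2*m) := by positivity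
            nlinarith
  have key2 : (2 : ℝ) ^ (-(2 * m)) * (1 + t) ^ (2 * m) ≤ 1 + t ^ (2 * m) := by
    have h2 : (0 : ℝ) < (2 : ℝ) ^ (2 * m) := by positivity
    rw [Real.rpow_neg (by norm_num)]
    rw [inv_mul_le_iff₀ h2]
    linarith [key]
  have hmain : (1 + t ^ (2 * m)) ^ (-s) ≤ 2 ^ (2 * m * s) * (1 + t) ^ (-(2 * m * s)) := by
    have hxpos : (0 : ℝ) < (2 : ℝ) ^ (-(2 * m)) * (1 + t) ^ (2 * m) := by positivity
    have := Real.rpow_le_rpow_of_nonpos hxpos key2 (by linarith : -s ≤ 0)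
    calc (1 + t ^ (2 * m)) ^ (-s)
        ≤ ((2 : ℝ) ^ (-(2 * m)) * (1 + t) ^ (2 * m)) ^ (-s) := this
      _ = 2 ^ (2 * m * s) * (1 + t) ^ (-(2 * m * s)) := by
          rw [Real.mul_rpow (by positivity) (by positivity),
            ← Real.rpow_mul (by norm_num : (0:ℝ) ≤ 2),
            ← Real.rpow_mul (by linarith : (0:ℝ) ≤ 1 + t)]
          ring_nf
  calc ‖(1 + t ^ (2 * m)) ^ (-s)‖ = (1 + t ^ (2 * m)) ^ (-s) := by
        rw [Real.norm_eq_abs, abs_of_nonneg (Real.rpow_nonneg hApos.le _)]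
    _ ≤ 2 ^ (2 * m * s) * (1 + t) ^ (-(2 * m * s)) := hmain

private lemma double_holder {α : Type*} [MeasurableSpace α] (μ : Measure α)
    (W F G : α → ℝ≥0∞) (hWm : Measurable W) (hFm : AEMeasurable F μ)
    (hGm : AEMeasurable G μ) (hW0 : ∀ x, W x ≠ 0) (hWt : ∀ x, W x ≠ ⊤)
    (a s : ℝ) (ha0 : 0 < a) (ha1 : a < 1)
    (hsa : -(1 + a) * (1 / (1 - a)) = -s) :
    ∫⁻ x, F x ^ a * G x ∂μ ≤
      ((∫⁻ x, W x * F x ^ (2 : ℝ) ∂μ) ^ a *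
        (∫⁻ x, W x ^ (-s) ∂μ) ^ (1 - a)) ^ (1 / 2 : ℝ) *
      (∫⁻ x, W x * G x ^ (2 : ℝ) ∂μ) ^ (1 / 2 : ℝ) := by
  have hconj2 : (1 / a).HolderConjugate (1 / (1 - a)) :=
    Real.holderConjugate_one_div ha0 (by linarith) (by ring)
  have h2 : ∫⁻ x, F x ^ (2 * a) * W x ^ (-1 : ℝ) ∂μ ≤
      (∫⁻ x, W x * F x ^ (2 : ℝ) ∂μ) ^ a * (∫⁻ x, W x ^ (-s) ∂μ) ^ (1 - a) := by
    have heq : ∀ x, F x ^ (2 * a) * W x ^ (-1 : ℝ) =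
        ((W x * F x ^ (2 : ℝ)) ^ a) * (W x ^ (-(1 + a))) := by
      intro x
      rw [ENNReal.mul_rpow_of_nonneg _ _ ha0.le, ← ENNReal.rpow_mul]
      rw [mul_right_comm, ← ENNReal.rpow_add _ _ (hW0 x) (hWt x),
        show a + -(1 + a) = (-1 : ℝ) from by ring]
      exact mul_comm _ _
    calc ∫⁻ x, F x ^ (2 * a) * W x ^ (-1 : ℝ) ∂μ
        = ∫⁻ x, ((fun x => (W x * F x ^ (2 : ℝ)) ^ a) *
            (fun x => W x ^ (-(1 + a)))) x ∂μ := lintegral_congr fun x => heq x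
      _ ≤ (∫⁻ x, ((W x * F x ^ (2 : ℝ)) ^ a) ^ (1 / a) ∂μ) ^ (1 / (1 / a)) *
            (∫⁻ x, (W x ^ (-(1 + a))) ^ (1 / (1 - a)) ∂μ) ^ (1 / (1 / (1 - a))) :=
          ENNReal.lintegral_mul_le_Lp_mul_Lq μ hconj2
            ((hWm.aemeasurable.mul (hFm.pow aemeasurable_const)).pow aemeasurable_const)
            (hWm.aemeasurable.pow aemeasurable_const)
      _ = (∫⁻ x, W x * F x ^ (2 : ℝ) ∂μ) ^ a * (∫⁻ x, W x ^ (-s) ∂μ) ^ (1 - a) := by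
          have h1a : a * (1 / a) = 1 := by field_simp
          have h1b : 1 / (1 / a) = a := one_div_one_div a
          have h1c : 1 / (1 / (1 - a)) = 1 - a := one_div_one_div _
          simp_rw [← ENNReal.rpow_mul, h1a, hsa, ENNReal.rpow_one, h1b, h1c]
  have hconj1 : (2 : ℝ).HolderConjugate 2 := Real.HolderConjugate.two_two
  have hWc : ∀ x, W x ^ (-(1 : ℝ) / 2) * W x ^ ((1 : ℝ) / 2) = 1 := fun x => by
    rw [← ENNReal.rpow_add _ _ (hW0 x) (hWt x)]
    norm_num
  have heq1 : ∀ x, F x ^ a * G x =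
      ((fun x => F x ^ a * W x ^ (-(1 : ℝ) / 2)) *
       (fun x => W x ^ ((1 : ℝ) / 2) * G x)) x := by
    intro x
    show F x ^ a * G x = (F x ^ a * W x ^ (-(1:ℝ)/2)) * (W x ^ ((1:ℝ)/2) * G x)
    rw [mul_assoc, ← mul_assoc (W x ^ (-(1:ℝ)/2)), hWc x, one_mul]
  have hpow1 : ∀ x, (F x ^ a * W x ^ (-(1:ℝ)/2)) ^ (2 : ℝ) =
      F x ^ (2 * a) * W x ^ (-1 : ℝ) := fun x => by
    rw [ENNReal.mul_rpow_of_nonneg _ _ (by norm_num : (0:ℝ) ≤ 2),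
      ← ENNReal.rpow_mul, ← ENNReal.rpow_mul]
    norm_num [mul_comm]
  have hpow2 : ∀ x, (W x ^ ((1:ℝ)/2) * G x) ^ (2 : ℝ) =
      W x * G x ^ (2 : ℝ) := fun x => by
    rw [ENNReal.mul_rpow_of_nonneg _ _ (by norm_num : (0:ℝ) ≤ 2),
      ← ENNReal.rpow_mul]
    norm_num
  calc ∫⁻ x, F x ^ a * G x ∂μ
      = ∫⁻ x, ((fun x => F x ^ a * W x ^ (-(1 : ℝ) / 2)) *
          (fun x => W x ^ ((1 : ℝ) / 2) * G x)) x ∂μ := lintegral_congr heq1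
    _ ≤ (∫⁻ x, (F x ^ a * W x ^ (-(1:ℝ)/2)) ^ (2 : ℝ) ∂μ) ^ (1 / 2 : ℝ) *
          (∫⁻ x, (W x ^ ((1:ℝ)/2) * G x) ^ (2 : ℝ) ∂μ) ^ (1 / 2 : ℝ) :=
        ENNReal.lintegral_mul_le_Lp_mul_Lq μ hconj1
          ((hFm.pow aemeasurable_const).mul (hWm.aemeasurable.pow aemeasurable_const))
          ((hWm.aemeasurable.pow aemeasurable_const).mul hGm)
    _ = (∫⁻ x, F x ^ (2 * a) * W x ^ (-1 : ℝ) ∂μ) ^ (1 / 2 : ℝ) *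
          (∫⁻ x, W x * G x ^ (2 : ℝ) ∂μ) ^ (1 / 2 : ℝ) := by
        rw [lintegral_congr hpow1, lintegral_congr hpow2]
    _ ≤ ((∫⁻ x, W x * F x ^ (2 : ℝ) ∂μ) ^ a *
          (∫⁻ x, W x ^ (-s) ∂μ) ^ (1 - a)) ^ (1 / 2 : ℝ) *
        (∫⁻ x, W x * G x ^ (2 : ℝ) ∂μ) ^ (1 / 2 : ℝ) := by
        gcongr

/-- Weighted Hölder estimate: `‖ |f|^{q⋆-1} g ‖_{L¹} ≤ C |f|_m^{q⋆-1} |g|_m`, where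
`|f|_m = (∫ (1+|ξ|^{2m}) f²)^{1/2}` and `q⋆ = (N+2)/(N+1)`. -/
theorem weighted_holder_estimate (N : ℕ) (hN : 1 ≤ N) (m : ℝ) (hm : m > (N : ℝ) / 2) :
    ∃ C : ℝ, 0 < C ∧
      ∀ f g : EuclideanSpace ℝ (Fin N) → ℝ,
        AEStronglyMeasurable f volume → AEStronglyMeasurable g volume →
        Integrable (fun ξ => (1 + ‖ξ‖ ^ (2 * m)) * f ξ ^ 2) volume →
        Integrable (fun ξ => (1 + ‖ξ‖ ^ (2 * m)) * g ξ ^ 2) volume →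
        ∫⁻ ξ, ENNReal.ofReal
            (|f ξ| ^ (((N : ℝ) + 2) / ((N : ℝ) + 1) - 1) * |g ξ|) ∂volume ≤
          ENNReal.ofReal (C *
            (∫ ξ, (1 + ‖ξ‖ ^ (2 * m)) * f ξ ^ 2) ^
              ((((N : ℝ) + 2) / ((N : ℝ) + 1) - 1) / 2) *
            (∫ ξ, (1 + ‖ξ‖ ^ (2 * m)) * g ξ ^ 2) ^ (1 / 2 : ℝ)) := by
  classical
  have hn1 : (1 : ℝ) ≤ N := by exact_mod_cast hN
  have hn0 : (0 : ℝ) < N := by linarith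
  set s : ℝ := ((N : ℝ) + 2) / (N : ℝ) with hs_def
  set a : ℝ := 1 / ((N : ℝ) + 1) with ha_def
  have ha0 : 0 < a := by rw [ha_def]; positivity
  have ha1 : a < 1 := by
    rw [ha_def, div_lt_one (by linarith)]; linarith
  have hexp : ((N : ℝ) + 2) / ((N : ℝ) + 1) - 1 = a := by
    rw [ha_def]; field_simp; norm_num
  have hsa : -(1 + a) * (1 / (1 - a)) = -s := by
    rw [ha_def, hs_def]
    have h1 : (N : ℝ) + 1 ≠ 0 := by linarith
    have h2 : (1 : ℝ) - 1 / ((N : ℝ) + 1) = (N : ℝ) / ((N : ℝ) + 1) := by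
      field_simp
      ring
    rw [h2]
    field_simp
    ring
  set J : ℝ := ∫ ξ : EuclideanSpace ℝ (Fin N), (1 + ‖ξ‖ ^ (2 * m)) ^ (-s) with hJ_def
  have hJint : Integrable (fun ξ : EuclideanSpace ℝ (Fin N) =>
      (1 + ‖ξ‖ ^ (2 * m)) ^ (-s)) volume := aux_weight_integrable N hN m hm
  have hJ0 : 0 ≤ J :=
    integral_nonneg fun ξ => Real.rpow_nonneg (by positivity) _
  refine ⟨J ^ ((1 - a) / 2) + 1, by positivity, fun f g hf hg hfi hgi => ?_⟩
  rw [hexp]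
  set w : EuclideanSpace ℝ (Fin N) → ℝ := fun ξ => 1 + ‖ξ‖ ^ (2 * m) with hw_def
  have hwpos : ∀ ξ, 0 < w ξ := fun ξ => by positivity
  set W : EuclideanSpace ℝ (Fin N) → ℝ≥0∞ := fun ξ => ENNReal.ofReal (w ξ) with hW_def
  have hW0 : ∀ ξ, W ξ ≠ 0 := fun ξ => by
    simp [hW_def, ENNReal.ofReal_eq_zero, not_le, hwpos ξ]
  have hWtop : ∀ ξ, W ξ ≠ ⊤ := fun ξ => ENNReal.ofReal_ne_top
  set F : EuclideanSpace ℝ (Fin N) → ℝ≥0∞ := fun ξ => ENNReal.ofReal |f ξ| with hF_def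
  set G : EuclideanSpace ℝ (Fin N) → ℝ≥0∞ := fun ξ => ENNReal.ofReal |g ξ| with hG_def
  have hwm : Measurable w := by fun_prop
  have hWm : Measurable W := ENNReal.measurable_ofReal.comp hwm
  have hFm : AEMeasurable F volume := ENNReal.measurable_ofReal.comp_aemeasurable
      (continuous_abs.measurable.comp_aemeasurable hf.aemeasurable)
  have hGm : AEMeasurable G volume := ENNReal.measurable_ofReal.comp_aemeasurable
      (continuous_abs.measurable.comp_aemeasurable hg.aemeasurable)
  set A : ℝ := ∫ ξ, (1 + ‖ξ‖ ^ (2 * m)) * f ξ ^ 2 with hA_def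
  set B : ℝ := ∫ ξ, (1 + ‖ξ‖ ^ (2 * m)) * g ξ ^ 2 with hB_def
  have hA0 : 0 ≤ A := integral_nonneg fun ξ => by positivity
  have hB0 : 0 ≤ B := integral_nonneg fun ξ => by positivity
  -- identification of the weighted L² integrals
  have hWF : ∫⁻ ξ, W ξ * F ξ ^ (2 : ℝ) = ENNReal.ofReal A := by
    rw [hA_def, ofReal_integral_eq_lintegral_ofReal hfi
      (Filter.Eventually.of_forall fun ξ => by positivity)]
    refine lintegral_congr fun ξ => ?_
    rw [ENNReal.ofReal_mul (hwpos ξ).le]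
    congr 1
    rw [← sq_abs, ← Real.rpow_natCast _ 2,
      ENNReal.ofReal_rpow_of_nonneg (abs_nonneg _) (by positivity)]
    norm_num
  have hWG : ∫⁻ ξ, W ξ * G ξ ^ (2 : ℝ) = ENNReal.ofReal B := by
    rw [hB_def, ofReal_integral_eq_lintegral_ofReal hgi
      (Filter.Eventually.of_forall fun ξ => by positivity)]
    refine lintegral_congr fun ξ => ?_
    rw [ENNReal.ofReal_mul (hwpos ξ).le]
    congr 1
    rw [← sq_abs, ← Real.rpow_natCast _ 2,
      ENNReal.ofReal_rpow_of_nonneg (abs_nonneg _) (by positivity)]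
    norm_num
  have hWs : ∫⁻ ξ, W ξ ^ (-s) = ENNReal.ofReal J := by
    rw [hJ_def, ofReal_integral_eq_lintegral_ofReal hJint
      (Filter.Eventually.of_forall fun ξ => Real.rpow_nonneg (by positivity) _)]
    exact lintegral_congr fun ξ => ENNReal.ofReal_rpow_of_pos (hwpos ξ)
  have hLHS : ∫⁻ ξ, ENNReal.ofReal (|f ξ| ^ a * |g ξ|) = ∫⁻ ξ, F ξ ^ a * G ξ :=
    lintegral_congr fun ξ => by
      rw [ENNReal.ofReal_mul (Real.rpow_nonneg (abs_nonneg _) _),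
        ENNReal.ofReal_rpow_of_nonneg (abs_nonneg _) ha0.le]
  have hkey := double_holder volume W F G hWm hFm hGm hW0 hWtop a s ha0 ha1 hsa
  rw [hWF, hWG, hWs] at hkey
  rw [hLHS]
  calc ∫⁻ ξ, F ξ ^ a * G ξ
      ≤ ((ENNReal.ofReal A) ^ a * (ENNReal.ofReal J) ^ (1 - a)) ^ (1 / 2 : ℝ) *
          (ENNReal.ofReal B) ^ (1 / 2 : ℝ) := hkey
    _ = ENNReal.ofReal (A ^ (a / 2) * J ^ ((1 - a) / 2) * B ^ (1 / 2 : ℝ)) := by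
        rw [ENNReal.mul_rpow_of_nonneg _ _ (by norm_num : (0:ℝ) ≤ 1/2),
          ← ENNReal.rpow_mul, ← ENNReal.rpow_mul,
          ENNReal.ofReal_rpow_of_nonneg hA0 (mul_nonneg ha0.le (by norm_num)),
          ENNReal.ofReal_rpow_of_nonneg hJ0 (mul_nonneg (by linarith) (by norm_num)),
          ENNReal.ofReal_rpow_of_nonneg hB0 (by norm_num : (0:ℝ) ≤ 1/2),
          ← ENNReal.ofReal_mul (by positivity), ← ENNReal.ofReal_mul (by positivity)]
        norm_num [mul_one_div]
    _ ≤ ENNReal.ofReal ((J ^ ((1 - a) / 2) + 1) * A ^ (a / 2) * B ^ (1 / 2 : ℝ)) := by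
        apply ENNReal.ofReal_le_ofReal
        have hA' : 0 ≤ A ^ (a / 2) := Real.rpow_nonneg hA0 _
        have hJ' : 0 ≤ J ^ ((1 - a) / 2) := Real.rpow_nonneg hJ0 _
        have hB' : 0 ≤ B ^ (1 / 2 : ℝ) := Real.rpow_nonneg hB0 _
        nlinarith
end
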